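/- For p ≥ 1 and λ > 0, the differential entropy of the p-dimensional isotropic Cauchy distribution with density f(x) = Γ((p+1)/2)/(π^{(p+1)/2}·λᵖ) · (1 + ‖x‖²/λ²)^{−(p+1)/2} equals g(p) = log(π^{(p+1)/2}·λᵖ/Γ((p+1)/2)) + ((p+1)/2)·(ψ((p+1)/2) − ψ(1/2)), where ψ is the digamma function. In particular, for p = 1 this equals log(4πλ). -/

import Mathlib

open MeasureTheory Real

/-- The digamma function `ψ = (log Γ)'`. -/
noncomputable def digamma (x : ℝ) : ℝ :=
  deriv (fun y => Real.log (Real.Gamma y)) x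

/-- The density of the `p`-dimensional isotropic Cauchy distribution with
scale `λ`. -/
noncomputable def cauchyDensity (p : ℕ) (lam : ℝ) (x : EuclideanSpace ℝ (Fin p)) : ℝ :=
  Real.Gamma (((p : ℝ) + 1) / 2) / (π ^ (((p : ℝ) + 1) / 2) * lam ^ p)
    * (1 + ‖x‖ ^ 2 / lam ^ 2) ^ (-(((p : ℝ) + 1) / 2))

open Set

lemma Gamma_hasDerivAt {x : ℝ} (hx : 0 < x) :
    HasDerivAt Real.Gamma (Real.Gamma x * digamma x) x := by
  have hd : DifferentiableAt ℝ Real.Gamma x :=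
    Real.differentiableAt_Gamma (fun m => ((neg_nonpos.mpr (Nat.cast_nonneg m)).trans_lt hx).ne')
  have hne : Real.Gamma x ≠ 0 := (Real.Gamma_pos_of_pos hx).ne'
  have hlog : HasDerivAt (fun y => Real.log (Real.Gamma y))
      (deriv Real.Gamma x / Real.Gamma x) x := hd.hasDerivAt.log hne
  have : digamma x = deriv Real.Gamma x / Real.Gamma x := hlog.deriv
  rw [this, mul_div_cancel₀ _ hne]
  exact hd.hasDerivAt

lemma logGamma_hasDerivAt {x : ℝ} (hx : 0 < x) :
    HasDerivAt (fun y => Real.log (Real.Gamma y)) (digamma x) x := by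
  have hne : Real.Gamma x ≠ 0 := (Real.Gamma_pos_of_pos hx).ne'
  have h := (Gamma_hasDerivAt hx).log hne
  rwa [mul_div_cancel_left₀ _ hne] at h

lemma digamma_one_sub_digamma_half : digamma 1 - digamma (1/2) = 2 * Real.log 2 := by
  have h1 : HasDerivAt (fun x : ℝ => Real.log (Real.Gamma x) + Real.log (Real.Gamma (x + 1/2)))
      (digamma (1/2) + digamma 1) (1/2) := by
    have ha := logGamma_hasDerivAt (x := 1/2) (by norm_num)
    have hb0 : HasDerivAt (fun y => Real.log (Real.Gamma y)) (digamma 1) (id (1/2 : ℝ) + 1/2) := by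
      norm_num
      exact logGamma_hasDerivAt one_pos
    have hb := HasDerivAt.comp (h₂ := fun y => Real.log (Real.Gamma y))
      (h := fun x => id x + 1/2) (1/2 : ℝ) hb0 ((hasDerivAt_id (1/2 : ℝ)).add_const (1/2))
    exact ha.add (by simpa [Function.comp_def] using hb)
  have h2 : HasDerivAt (fun x : ℝ => Real.log (Real.Gamma (2*x)) + (1 - 2*x) * Real.log 2
      + Real.log (Real.sqrt π))
      (2 * digamma 1 - 2 * Real.log 2) (1/2) := by
    have ha0 : HasDerivAt (fun y => Real.log (Real.Gamma y)) (digamma 1) (2 * id (1/2 : ℝ)) := by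
      norm_num
      exact logGamma_hasDerivAt one_pos
    have ha := HasDerivAt.comp (h₂ := fun y => Real.log (Real.Gamma y))
      (h := fun x => 2 * id x) (1/2 : ℝ) ha0 ((hasDerivAt_id (1/2 : ℝ)).const_mul 2)
    have ha' : HasDerivAt (fun x : ℝ => Real.log (Real.Gamma (2*x))) (2 * digamma 1) (1/2) := by
      simpa [Function.comp_def, mul_comm] using ha
    have hb : HasDerivAt (fun x : ℝ => (1 - 2*x) * Real.log 2) (-2 * Real.log 2) (1/2) := by
      have := (((hasDerivAt_id (1/2:ℝ)).const_mul 2).const_sub 1).mul_const (Real.log 2)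
      simpa using this
    have := (ha'.add hb).add_const (Real.log (Real.sqrt π))
    exact this.congr_deriv (by ring)
  have heq : (fun x : ℝ => Real.log (Real.Gamma x) + Real.log (Real.Gamma (x + 1/2)))
      =ᶠ[nhds (1/2 : ℝ)] (fun x : ℝ => Real.log (Real.Gamma (2*x)) + (1 - 2*x) * Real.log 2
      + Real.log (Real.sqrt π)) := by
    filter_upwards [Ioi_mem_nhds (show (0:ℝ) < 1/2 by norm_num)] with x hx
    have hx : (0:ℝ) < x := hx
    have h := Real.Gamma_mul_Gamma_add_half x
    have e1 : Real.log (Real.Gamma x * Real.Gamma (x + 1/2))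
        = Real.log (Real.Gamma x) + Real.log (Real.Gamma (x + 1/2)) :=
      Real.log_mul (Real.Gamma_pos_of_pos hx).ne' (Real.Gamma_pos_of_pos (by linarith)).ne'
    have e2 : Real.log (Real.Gamma (2*x) * 2 ^ (1 - 2*x) * Real.sqrt π)
        = Real.log (Real.Gamma (2*x)) + (1 - 2*x) * Real.log 2 + Real.log (Real.sqrt π) := by
      rw [Real.log_mul (by positivity) (by positivity), Real.log_mul (by positivity) (by positivity),
        Real.log_rpow (by norm_num)]
    rw [← e1, ← e2, h]
  have h2' := h2.congr_of_eventuallyEq heq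
  have := h1.unique h2'
  linarith

lemma betaIntegrand_integrableOn {a c : ℝ} (ha : 0 < a) (hc : 0 < c) :
    IntegrableOn (fun t : ℝ => t ^ (a-1) * (1-t) ^ (c-1)) (Ioo 0 1) := by
  have h := (intervalIntegrable_iff_integrableOn_Ioc_of_le zero_le_one).mp
    (Complex.betaIntegral_convergent (u := a) (v := c) (by simpa using ha) (by simpa using hc))
  have h2 : IntegrableOn (fun x : ℝ => ‖(x:ℂ) ^ ((a:ℂ) - 1) * (1 - (x:ℂ)) ^ ((c:ℂ) - 1)‖)
      (Ioo 0 1) := IntegrableOn.mono_set h.norm Ioo_subset_Ioc_self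
  refine (h2.congr_fun (fun t ht => ?_) measurableSet_Ioo)
  have h0 : (0:ℝ) ≤ t := ht.1.le
  have h1 : (0:ℝ) ≤ 1 - t := by linarith [ht.2]
  have e1 : ((t:ℂ)) ^ ((a:ℂ) - 1) = ((t ^ (a-1) : ℝ) : ℂ) := by
    rw [Complex.ofReal_cpow h0]; push_cast; ring_nf
  have e2 : ((1:ℂ) - (t:ℂ)) ^ ((c:ℂ) - 1) = (((1-t) ^ (c-1) : ℝ) : ℂ) := by
    rw [Complex.ofReal_cpow h1]; push_cast; ring_nf
  beta_reduce
  rw [e1, e2, ← Complex.ofReal_mul]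
  rw [Complex.norm_real, Real.norm_eq_abs, abs_of_nonneg (by positivity)]

lemma betaIntegral_real {a c : ℝ} (ha : 0 < a) (hc : 0 < c) :
    ∫ t in Ioo (0:ℝ) 1, t ^ (a-1) * (1-t) ^ (c-1)
      = Real.Gamma a * Real.Gamma c / Real.Gamma (a+c) := by
  have hG := Complex.Gamma_mul_Gamma_eq_betaIntegral (s := a) (t := c)
    (by simpa using ha) (by simpa using hc)
  have hbeta : Complex.betaIntegral a c
      = ((∫ t in Ioo (0:ℝ) 1, t ^ (a-1) * (1-t) ^ (c-1) : ℝ) : ℂ) := by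
    rw [Complex.betaIntegral, intervalIntegral.integral_of_le zero_le_one,
      integral_Ioc_eq_integral_Ioo]
    rw [show (∫ t in Ioo (0:ℝ) 1, (t:ℂ) ^ ((a:ℂ) - 1) * (1 - (t:ℂ)) ^ ((c:ℂ) - 1))
        = ∫ t in Ioo (0:ℝ) 1, ((t ^ (a-1) * (1-t) ^ (c-1) : ℝ) : ℂ) from
      setIntegral_congr_fun measurableSet_Ioo (fun t ht => ?_)]
    · exact integral_ofReal
    · have h0 : (0:ℝ) ≤ t := ht.1.le
      have h1 : (0:ℝ) ≤ 1 - t := by linarith [ht.2]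
      have e1 : ((t:ℂ)) ^ ((a:ℂ) - 1) = ((t ^ (a-1) : ℝ) : ℂ) := by
        rw [Complex.ofReal_cpow h0]; push_cast; ring_nf
      have e2 : ((1:ℂ) - (t:ℂ)) ^ ((c:ℂ) - 1) = (((1-t) ^ (c-1) : ℝ) : ℂ) := by
        rw [Complex.ofReal_cpow h1]; push_cast; ring_nf
      rw [e1, e2, ← Complex.ofReal_mul]
  rw [hbeta] at hG
  have hcast : ((a:ℂ) + (c:ℂ)) = ((a + c : ℝ) : ℂ) := by push_cast; ring
  rw [hcast, Complex.Gamma_ofReal, Complex.Gamma_ofReal, Complex.Gamma_ofReal,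
    ← Complex.ofReal_mul, ← Complex.ofReal_mul] at hG
  have := Complex.ofReal_injective hG
  have hne : Real.Gamma (a+c) ≠ 0 := (Real.Gamma_pos_of_pos (by linarith)).ne'
  field_simp
  linarith [this]
lemma log_le_rpow_eighth {y : ℝ} (hy : 0 < y) : Real.log y ≤ 8 * y ^ ((1:ℝ)/8) := by
  have h1 : Real.log (y ^ ((1:ℝ)/8)) = (1/8) * Real.log y := Real.log_rpow hy _
  have h2 : Real.log (y ^ ((1:ℝ)/8)) ≤ y ^ ((1:ℝ)/8) - 1 :=
    Real.log_le_sub_one_of_pos (Real.rpow_pos_of_pos hy _)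
  nlinarith [Real.rpow_pos_of_pos hy ((1:ℝ)/8)]

lemma beta_log {a : ℝ} (ha : 0 < a) :
    IntegrableOn (fun t : ℝ => t ^ (a-1) * ((1-t) ^ ((1:ℝ)/2-1) * Real.log (1-t))) (Ioo 0 1) ∧
    ∫ t in Ioo (0:ℝ) 1, t ^ (a-1) * ((1-t) ^ ((1:ℝ)/2-1) * Real.log (1-t))
      = (Real.Gamma a * Real.Gamma (1/2) / Real.Gamma (a+1/2))
        * (digamma (1/2) - digamma (a+1/2)) := by
  set μ := volume.restrict (Ioo (0:ℝ) 1) with hμ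
  set F : ℝ → ℝ → ℝ := fun b t => t ^ (a-1) * (1-t) ^ (b-1) with hF
  set F' : ℝ → ℝ → ℝ := fun b t => t ^ (a-1) * ((1-t) ^ (b-1) * Real.log (1-t)) with hF'
  have cont : ∀ b : ℝ, ContinuousOn (F b) (Ioo 0 1) := by
    intro b
    exact (continuousOn_id.rpow_const (fun t ht => Or.inl (ne_of_gt ht.1))).mul
      ((continuousOn_const.sub continuousOn_id).rpow_const
        (fun t ht => Or.inl (by simp only [Pi.sub_apply, id_eq]; linarith [ht.2])))
  have hF_meas : ∀ᶠ b in nhds (1/2 : ℝ), AEStronglyMeasurable (F b) μ :=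
    Filter.Eventually.of_forall fun b =>
      (cont b).aestronglyMeasurable measurableSet_Ioo
  have hF_int : Integrable (F (1/2)) μ := betaIntegrand_integrableOn ha (by norm_num)
  have hF'_meas : AEStronglyMeasurable (F' (1/2)) μ := by
    refine ContinuousOn.aestronglyMeasurable ?_ measurableSet_Ioo
    exact (continuousOn_id.rpow_const (fun t ht => Or.inl (ne_of_gt ht.1))).mul
      (((continuousOn_const.sub continuousOn_id).rpow_const
        (fun t ht => Or.inl (by simp only [Pi.sub_apply, id_eq]; linarith [ht.2]))).mul
        ((continuousOn_const.sub continuousOn_id).log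
          (fun t ht => by simp only [Pi.sub_apply, id_eq]; linarith [ht.2])))
  have h_bound : ∀ᵐ t ∂μ, ∀ b ∈ Metric.ball (1/2 : ℝ) (1/4),
      ‖F' b t‖ ≤ 8 * (t ^ (a-1) * (1-t) ^ ((1:ℝ)/8-1)) := by
    rw [hμ, ae_restrict_iff' measurableSet_Ioo]
    refine Filter.Eventually.of_forall fun t ht => fun b hb => ?_
    have ht1 : 0 < t := ht.1
    have ht2 : 0 < 1 - t := by linarith [ht.2]
    have hb' : |b - 1/2| < 1/4 := by simpa [Real.dist_eq] using hb
    have hb1 : -(3/4 : ℝ) ≤ b - 1 := by cases' abs_lt.mp hb' with h1 h2; linarith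
    have e1 : ‖F' b t‖ = t ^ (a-1) * ((1-t) ^ (b-1) * |Real.log (1-t)|) := by
      rw [hF', Real.norm_eq_abs, abs_mul, abs_mul,
        abs_of_nonneg (Real.rpow_nonneg ht1.le _), abs_of_nonneg (Real.rpow_nonneg ht2.le _)]
    rw [e1]
    have hlog : |Real.log (1-t)| ≤ 8 * (1-t) ^ (-(1:ℝ)/8) := by
      rw [abs_of_nonpos (Real.log_nonpos (by linarith) (by linarith)), ← Real.log_inv]
      calc Real.log (1-t)⁻¹ ≤ 8 * ((1-t)⁻¹) ^ ((1:ℝ)/8) := log_le_rpow_eighth (by positivity)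
        _ = 8 * (1-t) ^ (-(1:ℝ)/8) := by
            rw [← Real.rpow_neg_one, ← Real.rpow_mul ht2.le]
            norm_num
    have hexp : (1-t) ^ (b-1) ≤ (1-t) ^ (-(3/4:ℝ)) :=
      Real.rpow_le_rpow_of_exponent_ge ht2 (by linarith [ht.1]) hb1
    calc t ^ (a-1) * ((1-t) ^ (b-1) * |Real.log (1-t)|)
        ≤ t ^ (a-1) * ((1-t) ^ (-(3/4:ℝ)) * (8 * (1-t) ^ (-(1:ℝ)/8))) := by
          apply mul_le_mul_of_nonneg_left _ (Real.rpow_nonneg ht1.le _)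
          exact mul_le_mul hexp hlog (abs_nonneg _) (Real.rpow_nonneg ht2.le _)
      _ = 8 * (t ^ (a-1) * (1-t) ^ ((1:ℝ)/8-1)) := by
          rw [show (1-t) ^ (-(3/4:ℝ)) * (8 * (1-t) ^ (-(1:ℝ)/8))
              = 8 * ((1-t) ^ (-(3/4:ℝ)) * (1-t) ^ (-(1:ℝ)/8)) by ring,
            ← Real.rpow_add ht2]
          norm_num
          ring
  have bound_int : Integrable (fun t : ℝ => 8 * (t ^ (a-1) * (1-t) ^ ((1:ℝ)/8-1))) μ :=
    (betaIntegrand_integrableOn ha (by norm_num : (0:ℝ) < 1/8)).const_mul 8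
  have h_diff : ∀ᵐ t ∂μ, ∀ b ∈ Metric.ball (1/2 : ℝ) (1/4),
      HasDerivAt (fun b => F b t) (F' b t) b := by
    rw [hμ, ae_restrict_iff' measurableSet_Ioo]
    refine Filter.Eventually.of_forall fun t ht => fun b _ => ?_
    have ht2 : 0 < 1 - t := by linarith [ht.2]
    have h0 : HasDerivAt (fun x : ℝ => (1-t) ^ x) ((1-t) ^ (b-1) * Real.log (1-t)) (id b - 1) := by
      simp only [id]
      exact (Real.hasStrictDerivAt_const_rpow ht2 (b-1)).hasDerivAt
    have h1 := HasDerivAt.comp (h₂ := fun x : ℝ => (1-t) ^ x) (h := fun x : ℝ => id x - 1)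
      b h0 ((hasDerivAt_id b).sub_const 1)
    have h2 : HasDerivAt (fun b : ℝ => (1-t) ^ (b-1)) ((1-t) ^ (b-1) * Real.log (1-t)) b := by
      simpa [Function.comp_def] using h1
    simpa [hF, hF', mul_comm, mul_assoc, mul_left_comm] using h2.const_mul (t ^ (a-1))
  have key := hasDerivAt_integral_of_dominated_loc_of_deriv_le (Metric.ball_mem_nhds _ (by norm_num : (0:ℝ) < 1/4))
    hF_meas hF_int hF'_meas h_bound bound_int h_diff
  refine ⟨key.1, ?_⟩
  -- identify the derivative with that of the Gamma quotient
  have hGq : HasDerivAt (fun b => Real.Gamma a * Real.Gamma b / Real.Gamma (a+b))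
      ((Real.Gamma a * Real.Gamma (1/2) / Real.Gamma (a+1/2))
        * (digamma (1/2) - digamma (a+1/2))) (1/2 : ℝ) := by
    have hN : HasDerivAt (fun b => Real.Gamma a * Real.Gamma b)
        (Real.Gamma a * (Real.Gamma (1/2) * digamma (1/2))) (1/2 : ℝ) :=
      (Gamma_hasDerivAt (by norm_num)).const_mul _
    have hD0 : HasDerivAt Real.Gamma (Real.Gamma (a+1/2) * digamma (a+1/2)) (a + id (1/2 : ℝ)) := by
      simp only [id]
      exact Gamma_hasDerivAt (by positivity)
    have hD1 := HasDerivAt.comp (h₂ := Real.Gamma) (h := fun b : ℝ => a + id b)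
      (1/2 : ℝ) hD0 ((hasDerivAt_id (1/2 : ℝ)).const_add a)
    have hD : HasDerivAt (fun b : ℝ => Real.Gamma (a+b))
        (Real.Gamma (a+1/2) * digamma (a+1/2)) (1/2 : ℝ) := by
      simpa [Function.comp_def] using hD1
    have hne : Real.Gamma (a+1/2) ≠ 0 := (Real.Gamma_pos_of_pos (by positivity)).ne'
    have := hN.div hD hne
    refine this.congr_deriv ?_
    field_simp
  have heq : (fun b => ∫ t, F b t ∂μ)
      =ᶠ[nhds (1/2 : ℝ)] (fun b => Real.Gamma a * Real.Gamma b / Real.Gamma (a+b)) := by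
    filter_upwards [Ioi_mem_nhds (show (0:ℝ) < 1/2 by norm_num)] with b hb
    exact betaIntegral_real ha hb
  have h2' := hGq.congr_of_eventuallyEq heq
  exact key.2.unique h2'


lemma cauchy_subst {lam : ℝ} (hlam : 0 < lam) (g : ℝ → ℝ) :
    ∫ u in Ioi (0:ℝ), g u
      = ∫ t in Ioo (0:ℝ) 1,
          (lam / (2 * Real.sqrt (t/(1-t)) * (1-t)^2)) * g (lam * Real.sqrt (t/(1-t))) := by
  set f : ℝ → ℝ := fun t => lam * Real.sqrt (t/(1-t)) with hf
  set f' : ℝ → ℝ := fun t => lam / (2 * Real.sqrt (t/(1-t)) * (1-t)^2) with hf'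
  have hderiv : ∀ t ∈ Ioo (0:ℝ) 1, HasDerivWithinAt f (f' t) (Ioo 0 1) t := by
    intro t ht
    have ht1 : 0 < t := ht.1
    have ht2 : 0 < 1 - t := by linarith [ht.2]
    have hq : 0 < t / (1-t) := by positivity
    have h1 : HasDerivAt (fun t : ℝ => t/(1-t))
        ((1 * (1 - t) - t * (0 - 1)) / (1 - t) ^ 2) t :=
      (hasDerivAt_id t).div ((hasDerivAt_const t 1).sub (hasDerivAt_id t)) (ne_of_gt ht2)
    have h2 : HasDerivAt Real.sqrt (1 / (2 * Real.sqrt (id t / (1 - id t)))) (id t / (1 - id t)) := by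
      simp only [id]
      exact Real.hasDerivAt_sqrt (ne_of_gt hq)
    have h3 := HasDerivAt.comp (h₂ := Real.sqrt) (h := fun t : ℝ => id t / (1 - id t))
      t h2 (by simpa using h1)
    have h4 : HasDerivAt f
        (lam * (1 / (2 * Real.sqrt (t/(1-t))) * ((1 * (1 - t) - t * (0 - 1)) / (1 - t) ^ 2))) t := by
      simpa [hf, Function.comp, mul_assoc] using (h3.const_mul lam)
    have : lam * (1 / (2 * Real.sqrt (t/(1-t))) * ((1 * (1 - t) - t * (0 - 1)) / (1 - t) ^ 2))
        = f' t := by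
      rw [hf']
      have hs : 0 < Real.sqrt (t/(1-t)) := Real.sqrt_pos.mpr hq
      field_simp
      ring
    exact (this ▸ h4).hasDerivWithinAt
  have hinj : InjOn f (Ioo 0 1) := by
    intro t1 h1 t2 h2 hfeq
    have h11 : 0 < t1 := h1.1
    have h12 : 0 < 1 - t1 := by linarith [h1.2]
    have h21 : 0 < t2 := h2.1
    have h22 : 0 < 1 - t2 := by linarith [h2.2]
    have hs : Real.sqrt (t1/(1-t1)) = Real.sqrt (t2/(1-t2)) :=
      mul_left_cancel₀ (ne_of_gt hlam) hfeq
    have hq : t1/(1-t1) = t2/(1-t2) := by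
      have := congrArg (fun x => x^2) hs
      simpa [Real.sq_sqrt (by positivity : (0:ℝ) ≤ t1/(1-t1)),
        Real.sq_sqrt (by positivity : (0:ℝ) ≤ t2/(1-t2))] using this
    field_simp at hq
    linarith
  have himg : f '' Ioo 0 1 = Ioi 0 := by
    ext u
    constructor
    · rintro ⟨t, ht, rfl⟩
      have ht1 : 0 < t := ht.1
      have ht2 : 0 < 1 - t := by linarith [ht.2]
      have : 0 < Real.sqrt (t/(1-t)) := Real.sqrt_pos.mpr (by positivity)
      exact mul_pos hlam this
    · intro hu
      have hu : 0 < u := hu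
      refine ⟨u^2/(lam^2+u^2), ⟨by positivity, ?_⟩, ?_⟩
      · rw [div_lt_one (by positivity)]; nlinarith
      · have h1 : 1 - u^2/(lam^2+u^2) = lam^2/(lam^2+u^2) := by field_simp; ring
        have h2 : u^2/(lam^2+u^2) / (lam^2/(lam^2+u^2)) = (u/lam)^2 := by
          field_simp
        rw [hf]
        simp only
        rw [h1, h2, Real.sqrt_sq (by positivity)]
        field_simp
  have := integral_image_eq_integral_abs_deriv_smul measurableSet_Ioo hderiv hinj g
  rw [himg] at this
  rw [this]
  refine setIntegral_congr_fun measurableSet_Ioo fun t ht => ?_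
  have ht1 : 0 < t := ht.1
  have ht2 : 0 < 1 - t := by linarith [ht.2]
  have hs : 0 < Real.sqrt (t/(1-t)) := Real.sqrt_pos.mpr (by positivity)
  rw [smul_eq_mul, abs_of_pos (by positivity)]

lemma one_add_sq {lam t : ℝ} (hlam : 0 < lam) (ht : t ∈ Ioo (0:ℝ) 1) :
    1 + (lam * Real.sqrt (t/(1-t)))^2 / lam^2 = (1-t)⁻¹ := by
  have ht1 : 0 < t := ht.1
  have ht2 : 0 < 1 - t := by linarith [ht.2]
  have h : (lam * Real.sqrt (t/(1-t)))^2 = lam^2 * (t/(1-t)) := by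
    rw [mul_pow, Real.sq_sqrt (by positivity : (0:ℝ) ≤ t/(1-t))]
  rw [h]
  field_simp
  ring

lemma pullback_eq (p : ℕ) (hp : 1 ≤ p) {lam t : ℝ} (hlam : 0 < lam) (ht : t ∈ Ioo (0:ℝ) 1) :
    (lam / (2 * Real.sqrt (t/(1-t)) * (1-t)^2))
      * ((lam * Real.sqrt (t/(1-t))) ^ (p-1)
        * (1 + (lam * Real.sqrt (t/(1-t)))^2 / lam^2) ^ (-(((p:ℝ)+1)/2)))
    = lam^p / 2 * (t ^ ((p:ℝ)/2 - 1) * (1-t) ^ (-(1/2:ℝ))) := by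
  have ht1 : 0 < t := ht.1
  have ht2 : 0 < 1 - t := by linarith [ht.2]
  have hR : 0 < t/(1-t) := by positivity
  rw [one_add_sq hlam ht]
  have e3 : ((1-t)⁻¹) ^ (-(((p:ℝ)+1)/2)) = (1-t) ^ (((p:ℝ)+1)/2) := by
    rw [← Real.rpow_neg_one, ← Real.rpow_mul ht2.le]
    norm_num
  rw [e3, mul_pow]
  have e1 : Real.sqrt (t/(1-t)) ^ (p-1) = (t/(1-t)) ^ (((p:ℝ)-1)/2) := by
    rw [← Real.rpow_natCast (Real.sqrt (t/(1-t))) (p-1), Real.sqrt_eq_rpow,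
      ← Real.rpow_mul hR.le]
    congr 1
    rw [Nat.cast_sub hp]
    push_cast
    ring
  rw [e1, Real.sqrt_eq_rpow]
  have e2 : lam * lam ^ (p-1) = lam ^ p := by
    rw [← pow_succ']
    congr 1
    omega
  -- now collect exponents
  rw [Real.div_rpow ht1.le ht2.le, Real.div_rpow ht1.le ht2.le]
  rw [← e2]
  field_simp
  rw [show ((1:ℝ)-t)^(2:ℕ) = (1-t)^(((2:ℕ):ℝ)) from (Real.rpow_natCast _ 2).symm]
  have m1 : (1-t) ^ ((1:ℝ)/2) * (1-t) ^ (((p:ℝ)+1)/2)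
      = (1-t) ^ (((2:ℕ):ℝ)) * ((1-t) ^ ((-1:ℝ)/2) * (1-t) ^ (((p:ℝ)-1)/2)) := by
    rw [← Real.rpow_add ht2, ← Real.rpow_add ht2, ← Real.rpow_add ht2]
    congr 1
    push_cast
    ring
  have m2 : t ^ (((p:ℝ)-1)/2) = t ^ (((p:ℝ)-2)/2) * t ^ ((1:ℝ)/2) := by
    rw [← Real.rpow_add ht1]; congr 1; ring
  linear_combination (norm := ring_nf) (t ^ (((p:ℝ)-1)/2)) * m1
    + (((1-t) ^ (((2:ℕ):ℝ)) * ((1-t) ^ ((-1:ℝ)/2) * (1-t) ^ (((p:ℝ)-1)/2)))) * m2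
lemma base_bound {lam c s : ℝ} (hlam : 0 < lam) (hc : 0 ≤ c) (hs : 0 ≤ s) :
    (1 + s/lam^2) ^ (-c) ≤ (max 1 (lam^2)) ^ c * (1 + s) ^ (-c) := by
  have h1 : (0:ℝ) < 1 + s/lam^2 := by positivity
  have h2 : (0:ℝ) < 1 + s := by positivity
  have hM : (0:ℝ) < max 1 (lam^2) := lt_max_of_lt_left one_pos
  have key : 1 + s ≤ max 1 (lam^2) * (1 + s/lam^2) := by
    have e : s = lam^2 * (s/lam^2) := by field_simp
    have d : 0 ≤ s/lam^2 := by positivity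
    nlinarith [le_max_left (1:ℝ) (lam^2), le_max_right (1:ℝ) (lam^2)]
  have h3 : (1+s)^c ≤ (max 1 (lam^2))^c * (1+s/lam^2)^c := by
    rw [← Real.mul_rpow hM.le h1.le]
    exact Real.rpow_le_rpow h2.le key hc
  have hpos1 : (0:ℝ) < (1+s/lam^2)^c := Real.rpow_pos_of_pos h1 c
  have hpos2 : (0:ℝ) < (1+s)^c := Real.rpow_pos_of_pos h2 c
  have hposM : (0:ℝ) < (max 1 (lam^2))^c := Real.rpow_pos_of_pos hM c
  rw [Real.rpow_neg h1.le, Real.rpow_neg h2.le]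
  rw [inv_le_iff_one_le_mul₀ hpos1]
  rw [show (max 1 (lam^2))^c * ((1+s)^c)⁻¹ * (1+s/lam^2)^c
      = ((max 1 (lam^2))^c * (1+s/lam^2)^c) * ((1+s)^c)⁻¹ by ring]
  calc (1:ℝ) = (1+s)^c * ((1+s)^c)⁻¹ := (mul_inv_cancel₀ hpos2.ne').symm
    _ ≤ (max 1 (lam^2))^c * (1+s/lam^2)^c * ((1+s)^c)⁻¹ :=
        mul_le_mul_of_nonneg_right h3 (by positivity)

variable {p : ℕ}

lemma cauchy_int1 (hp : 1 ≤ p) {lam : ℝ} (hlam : 0 < lam) :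
    Integrable (fun x : EuclideanSpace ℝ (Fin p) =>
      (1 + ‖x‖^2/lam^2) ^ (-(((p:ℝ)+1)/2))) := by
  have hr : (Module.finrank ℝ (EuclideanSpace ℝ (Fin p)) : ℝ) < (p:ℝ) + 1 := by
    rw [finrank_euclideanSpace_fin]; linarith
  have hint := (integrable_rpow_neg_one_add_norm_sq (μ := volume)
    (E := EuclideanSpace ℝ (Fin p)) hr).const_mul ((max 1 (lam^2)) ^ (((p:ℝ)+1)/2))
  refine hint.mono' ?_ (Filter.Eventually.of_forall fun x => ?_)
  · refine Continuous.aestronglyMeasurable ?_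
    refine Continuous.rpow_const ?_ (fun x => Or.inl (by positivity))
    continuity
  · have h0 : (0:ℝ) < 1 + ‖x‖^2/lam^2 := by positivity
    rw [Real.norm_eq_abs, abs_of_pos (Real.rpow_pos_of_pos h0 _)]
    have := base_bound (c := ((p:ℝ)+1)/2) (s := ‖x‖^2) hlam (by positivity) (by positivity)
    calc (1 + ‖x‖^2/lam^2) ^ (-(((p:ℝ)+1)/2))
        ≤ (max 1 (lam^2)) ^ (((p:ℝ)+1)/2) * (1 + ‖x‖^2) ^ (-(((p:ℝ)+1)/2)) := this
      _ = (max 1 (lam^2)) ^ (((p:ℝ)+1)/2) * (1 + ‖x‖^2) ^ (-((p:ℝ)+1)/2) := by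
          rw [show (-(((p:ℝ)+1)/2)) = (-((p:ℝ)+1)/2) by ring]
  
lemma cauchy_int2 (hp : 1 ≤ p) {lam : ℝ} (hlam : 0 < lam) :
    Integrable (fun x : EuclideanSpace ℝ (Fin p) =>
      (1 + ‖x‖^2/lam^2) ^ (-(((p:ℝ)+1)/2)) * Real.log (1 + ‖x‖^2/lam^2)) := by
  have hr : (Module.finrank ℝ (EuclideanSpace ℝ (Fin p)) : ℝ) < (p:ℝ) + 3/4 := by
    rw [finrank_euclideanSpace_fin]; linarith
  have hint := (integrable_rpow_neg_one_add_norm_sq (μ := volume)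
    (E := EuclideanSpace ℝ (Fin p)) hr).const_mul
    (8 * (max 1 (lam^2)) ^ (((p:ℝ)+3/4)/2))
  refine hint.mono' ?_ (Filter.Eventually.of_forall fun x => ?_)
  · have hb : Continuous (fun x : EuclideanSpace ℝ (Fin p) => 1 + ‖x‖^2/lam^2) := by continuity
    refine Continuous.aestronglyMeasurable ?_
    exact (hb.rpow_const (fun x => Or.inl (by positivity))).mul
      (hb.log (fun x => ne_of_gt (by positivity)))
  · have h0 : (0:ℝ) < 1 + ‖x‖^2/lam^2 := by positivity
    have hlog0 : 0 ≤ Real.log (1 + ‖x‖^2/lam^2) := Real.log_nonneg (le_add_of_nonneg_right (by positivity))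
    rw [Real.norm_eq_abs, abs_of_nonneg (by positivity)]
    have hlog : Real.log (1 + ‖x‖^2/lam^2) ≤ 8 * (1 + ‖x‖^2/lam^2) ^ ((1:ℝ)/8) :=
      log_le_rpow_eighth h0
    have step1 : (1 + ‖x‖^2/lam^2) ^ (-(((p:ℝ)+1)/2)) * Real.log (1 + ‖x‖^2/lam^2)
        ≤ 8 * (1 + ‖x‖^2/lam^2) ^ (-(((p:ℝ)+3/4)/2)) := by
      have e : (1 + ‖x‖^2/lam^2) ^ (-(((p:ℝ)+1)/2)) * (8 * (1 + ‖x‖^2/lam^2) ^ ((1:ℝ)/8))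
          = 8 * (1 + ‖x‖^2/lam^2) ^ (-(((p:ℝ)+3/4)/2)) := by
        rw [show (1 + ‖x‖^2/lam^2) ^ (-(((p:ℝ)+1)/2)) * (8 * (1 + ‖x‖^2/lam^2) ^ ((1:ℝ)/8))
            = 8 * ((1 + ‖x‖^2/lam^2) ^ (-(((p:ℝ)+1)/2)) * (1 + ‖x‖^2/lam^2) ^ ((1:ℝ)/8)) by ring,
          ← Real.rpow_add h0]
        congr 1
        ring
      rw [← e]
      exact mul_le_mul_of_nonneg_left hlog (by positivity)
    have step2 : (1 + ‖x‖^2/lam^2) ^ (-(((p:ℝ)+3/4)/2))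
        ≤ (max 1 (lam^2)) ^ (((p:ℝ)+3/4)/2) * (1 + ‖x‖^2) ^ (-(((p:ℝ)+3/4)/2)) :=
      base_bound hlam (by positivity) (by positivity)
    calc (1 + ‖x‖^2/lam^2) ^ (-(((p:ℝ)+1)/2)) * Real.log (1 + ‖x‖^2/lam^2)
        ≤ 8 * (1 + ‖x‖^2/lam^2) ^ (-(((p:ℝ)+3/4)/2)) := step1
      _ ≤ 8 * ((max 1 (lam^2)) ^ (((p:ℝ)+3/4)/2) * (1 + ‖x‖^2) ^ (-(((p:ℝ)+3/4)/2))) :=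
          mul_le_mul_of_nonneg_left step2 (by norm_num)
      _ = 8 * (max 1 (lam^2)) ^ (((p:ℝ)+3/4)/2) * (1 + ‖x‖^2) ^ (-((p:ℝ)+3/4)/2) := by
          rw [show -(((p:ℝ)+3/4)/2) = -((p:ℝ)+3/4)/2 by ring]
          ring

section Assembly
open MeasureTheory Real Set

variable {p : ℕ}

lemma Ioi_eval1 (hp : 1 ≤ p) {lam : ℝ} (hlam : 0 < lam) :
    ∫ y in Ioi (0:ℝ), y ^ (p-1) * (1 + y^2/lam^2) ^ (-(((p:ℝ)+1)/2))
      = lam^p/2 * (Real.Gamma ((p:ℝ)/2) * Real.Gamma (1/2)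
          / Real.Gamma ((p:ℝ)/2 + 1/2)) := by
  have hp0 : (0:ℝ) < (p:ℝ)/2 := by
    have : (0:ℝ) < (p:ℝ) := by exact_mod_cast hp
    linarith
  rw [cauchy_subst hlam (fun u => u ^ (p-1) * (1 + u^2/lam^2) ^ (-(((p:ℝ)+1)/2)))]
  rw [setIntegral_congr_fun measurableSet_Ioo (g := fun t : ℝ =>
      lam^p/2 * (t ^ ((p:ℝ)/2 - 1) * (1-t) ^ ((1:ℝ)/2 - 1)))
    (fun t ht => by
      have e := pullback_eq p hp hlam ht
      rw [show ((1:ℝ)/2 - 1) = -(1/2:ℝ) by norm_num]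
      exact e)]
  rw [MeasureTheory.integral_const_mul]
  rw [betaIntegral_real hp0 (by norm_num : (0:ℝ) < 1/2)]

lemma Ioi_eval2 (hp : 1 ≤ p) {lam : ℝ} (hlam : 0 < lam) :
    ∫ y in Ioi (0:ℝ), y ^ (p-1) * ((1 + y^2/lam^2) ^ (-(((p:ℝ)+1)/2))
        * Real.log (1 + y^2/lam^2))
      = lam^p/2 * (Real.Gamma ((p:ℝ)/2) * Real.Gamma (1/2) / Real.Gamma ((p:ℝ)/2 + 1/2))
          * (digamma ((p:ℝ)/2 + 1/2) - digamma (1/2)) := by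
  have hp0 : (0:ℝ) < (p:ℝ)/2 := by
    have : (0:ℝ) < (p:ℝ) := by exact_mod_cast hp
    linarith
  rw [cauchy_subst hlam (fun u => u ^ (p-1) * ((1 + u^2/lam^2) ^ (-(((p:ℝ)+1)/2))
        * Real.log (1 + u^2/lam^2)))]
  rw [setIntegral_congr_fun measurableSet_Ioo (g := fun t : ℝ =>
      -(lam^p/2) * (t ^ ((p:ℝ)/2 - 1) * ((1-t) ^ ((1:ℝ)/2 - 1) * Real.log (1-t))))
    (fun t ht => by
      have e := pullback_eq p hp hlam ht
      have ht2 : (0:ℝ) < 1 - t := by linarith [ht.2]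
      simp only
      rw [one_add_sq hlam ht] at e ⊢
      rw [Real.log_inv, show ((1:ℝ)/2 - 1) = -(1/2:ℝ) by norm_num]
      linear_combination (-(Real.log (1-t))) * e)]
  rw [MeasureTheory.integral_const_mul]
  rw [(beta_log hp0).2]
  ring

end Assembly
section Final
open MeasureTheory Real Set

/-- the differential entropy of the `p`-dimensional isotropic Cauchy
distribution with scale `λ` equals
`g(p) = log(π^{(p+1)/2} λᵖ / Γ((p+1)/2)) + ((p+1)/2)(ψ((p+1)/2) − ψ(1/2))`;
for `p = 1` this equals `log(4πλ)`. -/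
theorem cauchy_differential_entropy (p : ℕ) (hp : 1 ≤ p) (lam : ℝ) (hlam : 0 < lam) :
    (-∫ x : EuclideanSpace ℝ (Fin p),
        cauchyDensity p lam x * Real.log (cauchyDensity p lam x)
      = Real.log (π ^ (((p : ℝ) + 1) / 2) * lam ^ p / Real.Gamma (((p : ℝ) + 1) / 2))
        + (((p : ℝ) + 1) / 2) * (digamma (((p : ℝ) + 1) / 2) - digamma (1 / 2))) ∧
    (p = 1 →
      -∫ x : EuclideanSpace ℝ (Fin p),
          cauchyDensity p lam x * Real.log (cauchyDensity p lam x)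
        = Real.log (4 * π * lam)) := by
  have hpR : (0:ℝ) < (p:ℝ) := by exact_mod_cast hp
  have hπ : (0:ℝ) < π := Real.pi_pos
  have hs : (0:ℝ) < ((p:ℝ)+1)/2 := by linarith
  have ha : (0:ℝ) < (p:ℝ)/2 := by linarith
  have hΓs : 0 < Real.Gamma (((p:ℝ)+1)/2) := Real.Gamma_pos_of_pos hs
  have hΓa : 0 < Real.Gamma ((p:ℝ)/2) := Real.Gamma_pos_of_pos ha
  have hπs : (0:ℝ) < π ^ (((p:ℝ)+1)/2) := Real.rpow_pos_of_pos hπ _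
  have hlp : (0:ℝ) < lam ^ p := pow_pos hlam p
  set C : ℝ := Real.Gamma (((p:ℝ)+1)/2) / (π ^ (((p:ℝ)+1)/2) * lam ^ p) with hC
  have hCpos : 0 < C := by positivity
  haveI : Nonempty (Fin p) := ⟨⟨0, hp⟩⟩
  haveI : Nontrivial (EuclideanSpace ℝ (Fin p)) := by
    apply Module.nontrivial_of_finrank_pos (R := ℝ)
    rw [finrank_euclideanSpace_fin]
    omega
  -- volume of unit ball
  have hVb : (volume (Metric.ball (0 : EuclideanSpace ℝ (Fin p)) 1)).toReal
      = Real.sqrt π ^ p / Real.Gamma ((p:ℝ)/2 + 1) := by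
    rw [EuclideanSpace.volume_ball]
    rw [Fintype.card_fin, ENNReal.ofReal_one, one_pow, one_mul, ENNReal.toReal_ofReal]
    positivity
  set Vb : ℝ := Real.sqrt π ^ p / Real.Gamma ((p:ℝ)/2 + 1) with hVbdef
  set Beta : ℝ := Real.Gamma ((p:ℝ)/2) * Real.Gamma (1/2) / Real.Gamma ((p:ℝ)/2 + 1/2)
    with hBeta
  -- the two radial integrals
  have IB : ∫ x : EuclideanSpace ℝ (Fin p), (1 + ‖x‖^2/lam^2) ^ (-(((p:ℝ)+1)/2))
      = (p:ℝ) * Vb * (lam^p/2 * Beta) := by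
    have h : ∫ x : EuclideanSpace ℝ (Fin p), (1 + ‖x‖^2/lam^2) ^ (-(((p:ℝ)+1)/2))
        = Module.finrank ℝ (EuclideanSpace ℝ (Fin p))
          • (volume (Metric.ball (0 : EuclideanSpace ℝ (Fin p)) 1)).toReal
          • ∫ y in Ioi (0:ℝ), y ^ (Module.finrank ℝ (EuclideanSpace ℝ (Fin p)) - 1)
            • (1 + y^2/lam^2) ^ (-(((p:ℝ)+1)/2)) :=
      MeasureTheory.integral_fun_norm_addHaar volume
        (fun r : ℝ => (1 + r^2/lam^2) ^ (-(((p:ℝ)+1)/2)))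
    rw [finrank_euclideanSpace_fin, hVb, nsmul_eq_mul, smul_eq_mul] at h
    simp only [smul_eq_mul] at h
    rw [h, Ioi_eval1 hp hlam, ← hBeta]
    ring
  have IL : ∫ x : EuclideanSpace ℝ (Fin p),
        (1 + ‖x‖^2/lam^2) ^ (-(((p:ℝ)+1)/2)) * Real.log (1 + ‖x‖^2/lam^2)
      = (p:ℝ) * Vb * (lam^p/2 * Beta)
          * (digamma ((p:ℝ)/2 + 1/2) - digamma (1/2)) := by
    have h : ∫ x : EuclideanSpace ℝ (Fin p),
          (1 + ‖x‖^2/lam^2) ^ (-(((p:ℝ)+1)/2)) * Real.log (1 + ‖x‖^2/lam^2)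
        = Module.finrank ℝ (EuclideanSpace ℝ (Fin p))
          • (volume (Metric.ball (0 : EuclideanSpace ℝ (Fin p)) 1)).toReal
          • ∫ y in Ioi (0:ℝ), y ^ (Module.finrank ℝ (EuclideanSpace ℝ (Fin p)) - 1)
            • ((1 + y^2/lam^2) ^ (-(((p:ℝ)+1)/2)) * Real.log (1 + y^2/lam^2)) :=
      MeasureTheory.integral_fun_norm_addHaar volume
        (fun r : ℝ => (1 + r^2/lam^2) ^ (-(((p:ℝ)+1)/2)) * Real.log (1 + r^2/lam^2))
    rw [finrank_euclideanSpace_fin, hVb, nsmul_eq_mul, smul_eq_mul] at h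
    simp only [smul_eq_mul] at h
    rw [h, Ioi_eval2 hp hlam, ← hBeta]
    ring
  -- normalizing constant: C * (p * Vb * (lam^p/2 * Beta)) = 1
  have hA : C * ((p:ℝ) * Vb * (lam^p/2 * Beta)) = 1 := by
    rw [hC, hVbdef, hBeta]
    have e1 : Real.Gamma ((p:ℝ)/2 + 1) = ((p:ℝ)/2) * Real.Gamma ((p:ℝ)/2) :=
      Real.Gamma_add_one (ne_of_gt ha)
    have e2 : Real.Gamma ((1:ℝ)/2) = Real.sqrt π := Real.Gamma_one_half_eq
    have e3 : Real.sqrt π ^ p = π ^ ((p:ℝ)/2) := by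
      rw [Real.sqrt_eq_rpow, ← Real.rpow_natCast (π ^ ((1:ℝ)/2)) p, ← Real.rpow_mul hπ.le]
      congr 1
      ring
    have e4 : π ^ (((p:ℝ)+1)/2) = π ^ ((p:ℝ)/2) * Real.sqrt π := by
      rw [Real.sqrt_eq_rpow, ← Real.rpow_add hπ]
      congr 1
      ring
    have e5 : Real.Gamma ((p:ℝ)/2 + 1/2) = Real.Gamma (((p:ℝ)+1)/2) := by
      congr 1
      ring
    rw [e1, e2, e3, e4, e5]
    have hπa : (0:ℝ) < π ^ ((p:ℝ)/2) := Real.rpow_pos_of_pos hπ _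
    have hsq : (0:ℝ) < Real.sqrt π := Real.sqrt_pos.mpr hπ
    field_simp
  -- split the entropy integral
  have hsplit : ∫ x : EuclideanSpace ℝ (Fin p),
        cauchyDensity p lam x * Real.log (cauchyDensity p lam x)
      = (C * Real.log C) * (∫ x : EuclideanSpace ℝ (Fin p),
            (1 + ‖x‖^2/lam^2) ^ (-(((p:ℝ)+1)/2)))
        - (C * (((p:ℝ)+1)/2)) * (∫ x : EuclideanSpace ℝ (Fin p),
            (1 + ‖x‖^2/lam^2) ^ (-(((p:ℝ)+1)/2)) * Real.log (1 + ‖x‖^2/lam^2)) := by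
    rw [← MeasureTheory.integral_const_mul, ← MeasureTheory.integral_const_mul,
      ← MeasureTheory.integral_sub
        (((cauchy_int1 hp hlam).const_mul _))
        (((cauchy_int2 hp hlam).const_mul _))]
    refine integral_congr_ae (Filter.Eventually.of_forall fun x => ?_)
    dsimp only
    have hb : (0:ℝ) < 1 + ‖x‖^2/lam^2 := by positivity
    have hbr : (0:ℝ) < (1 + ‖x‖^2/lam^2) ^ (-(((p:ℝ)+1)/2)) := Real.rpow_pos_of_pos hb _
    have hden : cauchyDensity p lam x = C * (1 + ‖x‖^2/lam^2) ^ (-(((p:ℝ)+1)/2)) := rfl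
    rw [hden, Real.log_mul hCpos.ne' hbr.ne', Real.log_rpow hb]
    ring
  have hmain : -∫ x : EuclideanSpace ℝ (Fin p),
        cauchyDensity p lam x * Real.log (cauchyDensity p lam x)
      = Real.log (π ^ (((p : ℝ) + 1) / 2) * lam ^ p / Real.Gamma (((p : ℝ) + 1) / 2))
        + (((p : ℝ) + 1) / 2) * (digamma (((p : ℝ) + 1) / 2) - digamma (1 / 2)) := by
    rw [hsplit, IB, IL]
    have e5 : ((p:ℝ)/2 + 1/2) = (((p:ℝ)+1)/2) := by ring
    rw [e5]
    have hT := hA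
    have hlogC : Real.log C
        = -(Real.log (π ^ (((p : ℝ) + 1) / 2) * lam ^ p / Real.Gamma (((p : ℝ) + 1) / 2))) := by
      rw [hC, Real.log_div hΓs.ne' (by positivity), Real.log_div (by positivity) hΓs.ne']
      ring
    set T : ℝ := (p:ℝ) * Vb * (lam^p/2 * Beta) with hT2
    set D : ℝ := digamma (((p:ℝ)+1)/2) - digamma (1/2) with hD
    have : C * Real.log C * T - C * (((p:ℝ)+1)/2) * (T * D)
        = Real.log C * (C * T) - (((p:ℝ)+1)/2) * D * (C * T) := by ring
    rw [this, hA, hlogC]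
    ring
  refine ⟨hmain, fun hp1 => ?_⟩
  subst hp1
  rw [hmain]
  have h2 : (((1:ℕ):ℝ) + 1) / 2 = 1 := by norm_num
  rw [h2, Real.rpow_one, Real.Gamma_one, pow_one, digamma_one_sub_digamma_half]
  rw [div_one, Real.log_mul hπ.ne' hlam.ne',
    show (4:ℝ) * π * lam = (π * lam) * 4 by ring,
    Real.log_mul (by positivity) (by norm_num), Real.log_mul hπ.ne' hlam.ne',
    show (4:ℝ) = 2^2 by norm_num, Real.log_pow]
  push_cast
  ring

end Final
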